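/- For the quantum encoding with a fair key bit, the Holevo quantity equals S* = H₂(cos²(π/8)) < 1, so for any measurement outcome Z on the transmitted qubit, I(X; Z | Y) ≤ S* and hence H(X | Y, Z) ≥ 1 − S* > 0. -/

import Mathlib

/-! Both density matrices have eigenvalues cos²(π/8) = (2 + √2)/4 and sin²(π/8) = (2 - √2)/4,
with eigenvectors (1, √2 - 1) and (1, -(1 + √2)), whose roles swap between `Y = 0` and `Y = 1`.
Since sin² = 1 - cos², `S*` is the binary entropy of cos²(π/8) in bits, which is below 1
because cos²(π/8) ≠ 1/2; the bound on the equivocation is then linear arithmetic. -/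

open Real Matrix

theorem cos_sq_pi_div_eight : cos (π / 8) ^ 2 = (2 + √2) / 4 := by
  rw [cos_pi_div_eight, div_pow, sq_sqrt (by positivity)]
  norm_num

theorem sin_sq_pi_div_eight : sin (π / 8) ^ 2 = (2 - √2) / 4 := by
  rw [sin_sq, cos_sq_pi_div_eight]
  ring

theorem Matrix.fin_two_mulVec_eq_smul_iff {R : Type*} [CommRing R] (a b c d t μ : R) :
    !![a, b; c, d] *ᵥ ![1, t] = μ • ![1, t] ↔ a + b * t = μ ∧ c + d * t = μ * t := by
  simp [funext_iff, Fin.forall_fin_two, mul_comm t]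

theorem Matrix.exists_fin_two_mulVec_eq_smul {R : Type*} [CommRing R] [Nontrivial R]
    {a b c d μ : R} (t : R) (h₀ : a + b * t = μ) (h₁ : c + d * t = μ * t) :
    ∃ v : Fin 2 → R, v ≠ 0 ∧ !![a, b; c, d] *ᵥ v = μ • v :=
  ⟨![1, t], fun h => one_ne_zero (congrFun h 0),
    (fin_two_mulVec_eq_smul_iff a b c d t μ).2 ⟨h₀, h₁⟩⟩

theorem neg_mul_logb_sub_mul_logb_eq_binEntropy_div (b p : ℝ) :
    -(p * logb b p) - (1 - p) * logb b (1 - p) = binEntropy p / log b := by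
  simp only [binEntropy, logb, log_inv]
  ring

theorem binEntropy_div_log_two_lt_one {p : ℝ} (hp : p ≠ 2⁻¹) : binEntropy p / log 2 < 1 :=
  (div_lt_one (log_pos one_lt_two)).2 (binEntropy_lt_log_two.2 hp)

theorem cos_sq_pi_div_eight_ne_half : cos (π / 8) ^ 2 ≠ 2⁻¹ := by
  rw [cos_sq_pi_div_eight]
  have : 0 < √2 := by positivity
  intro h
  linarith

/-- For the BB84-style quantum encoding of a message bit `Y` with a fair key bit `X`
choosing the basis, the ensemble density matrix `ρ(Y)` (equal to `[[3/4,1/4],[1/4,1/4]]`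
for `Y = 0` and `[[1/4,-1/4],[-1/4,3/4]]` for `Y = 1`) has eigenvalues `cos²(π/8)` and
`sin²(π/8)`, so its von Neumann entropy (base 2) is the Holevo quantity
`S* = H₂(cos²(π/8)) < 1`; hence, assuming the Holevo bound `I(X;Z|Y) ≤ S*` for any
measurement outcome `Z`, the equivocation `H(X|Y,Z) = H(X|Y) − I(X;Z|Y) = 1 − I(X;Z|Y)`
satisfies `H(X|Y,Z) ≥ 1 − S* > 0`. -/
theorem stmt11 (ρ : Bool → Matrix (Fin 2) (Fin 2) ℝ)
    (hρ0 : ρ false = !![3/4, 1/4; 1/4, 1/4]) (hρ1 : ρ true = !![1/4, -1/4; -1/4, 3/4])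
    (Sstar : ℝ)
    (hS : Sstar = -(Real.cos (π / 8) ^ 2 * Real.logb 2 (Real.cos (π / 8) ^ 2))
        - Real.sin (π / 8) ^ 2 * Real.logb 2 (Real.sin (π / 8) ^ 2)) :
    (∀ y, ∃ v : Fin 2 → ℝ, v ≠ 0 ∧ (ρ y).mulVec v = Real.cos (π / 8) ^ 2 • v) ∧
    (∀ y, ∃ w : Fin 2 → ℝ, w ≠ 0 ∧ (ρ y).mulVec w = Real.sin (π / 8) ^ 2 • w) ∧
    Sstar < 1 ∧ 0 < 1 - Sstar ∧
    (∀ I H : ℝ, I ≤ Sstar → H = 1 - I → 1 - Sstar ≤ H) := by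
  have h2 : √2 ^ 2 = 2 := sq_sqrt zero_le_two
  rw [sin_sq, neg_mul_logb_sub_mul_logb_eq_binEntropy_div] at hS
  have hS_lt_one : Sstar < 1 := hS ▸ binEntropy_div_log_two_lt_one cos_sq_pi_div_eight_ne_half
  refine ⟨fun y => ?_, fun y => ?_, hS_lt_one, by linarith, fun I H hI hH => by linarith⟩
  · rw [cos_sq_pi_div_eight]
    cases y
    · rw [hρ0]
      exact exists_fin_two_mulVec_eq_smul (√2 - 1) (by ring) (by linear_combination -h2 / 4)
    · rw [hρ1]
      exact exists_fin_two_mulVec_eq_smul (-(1 + √2)) (by ring) (by linear_combination h2 / 4)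
  · rw [sin_sq_pi_div_eight]
    cases y
    · rw [hρ0]
      exact exists_fin_two_mulVec_eq_smul (-(1 + √2)) (by ring) (by linear_combination -h2 / 4)
    · rw [hρ1]
      exact exists_fin_two_mulVec_eq_smul (√2 - 1) (by ring) (by linear_combination h2 / 4)
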